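/- arXiv:0904.1967 — 5 statements merged into one kernel-verified Lean document; each statement's English description precedes it below -/
import Mathlib

section
/- Let T be a finite 3-coloured tournament in which every vertex is incident with edges of at most two of the three colours. Then T contains either a set of three vertices spanning a T_3, or a single vertex that monochromatically dominates every other vertex of T. -/
/-- A 3-coloured tournament on vertex type `V`: between any two distinct
vertices there is exactly one directed edge (`beats`), and `colour x y` gives
the colour (one of three: red, blue, green) of the edge from `x` to `y`
(meaningful when `beats x y` holds). -/
structure CTournament (V : Type*) where
  beats : V → V → Prop
  irrefl : ∀ v, ¬ beats v v
  asymm : ∀ v w, beats v w → ¬ beats w v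
  total : ∀ v w, v ≠ w → beats v w ∨ beats w v
  colour : V → V → Fin 3

namespace CTournament

/-- The colour red. -/
def red : Fin 3 := 0
/-- The colour blue. -/
def blue : Fin 3 := 1
/-- The colour green. -/
def green : Fin 3 := 2

variable {V : Type*} (T : CTournament V)

/-- `x` monochromatically dominates `y` in colour `c`: there is a directed
path (with at least one edge) from `x` to `y` all of whose edges have
colour `c`. -/
def Dom (c : Fin 3) (x y : V) : Prop :=
  Relation.TransGen (fun a b => T.beats a b ∧ T.colour a b = c) x y

/-- `x` monochromatically dominates `y` (in some colour). -/
def MDom (x y : V) : Prop := ∃ c, T.Dom c x y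

/-- `x` monochromatically dominates `y` in colour `c` within the
subtournament induced on the vertex set `S`. -/
def DomIn (S : Set V) (c : Fin 3) (x y : V) : Prop :=
  Relation.TransGen (fun a b => a ∈ S ∧ b ∈ S ∧ T.beats a b ∧ T.colour a b = c) x y

/-- `x` monochromatically dominates `y` within the subtournament induced on `S`. -/
def MDomIn (S : Set V) (x y : V) : Prop := ∃ c, T.DomIn S c x y

/-- `T` contains a `T_3`: three vertices spanning a cyclic triangle whose
three edges have three pairwise distinct colours. -/
def HasT3 : Prop :=
  ∃ a b c : V, T.beats a b ∧ T.beats b c ∧ T.beats c a ∧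
    T.colour a b ≠ T.colour b c ∧ T.colour b c ≠ T.colour c a ∧
    T.colour a b ≠ T.colour c a

/-- Vertex `v` is incident with an edge of colour `c`. -/
def IncidentColour (v : V) (c : Fin 3) : Prop :=
  ∃ w, (T.beats v w ∧ T.colour v w = c) ∨ (T.beats w v ∧ T.colour w v = c)

/-- `T` is a minimal counterexample: it contains no `T_3`, no vertex
monochromatically dominates every other vertex, and every proper nonempty
subset of the vertices spans a subtournament containing a vertex that
monochromatically dominates (within that subtournament) every other vertex
of the subset. -/
def MinimalCex : Prop :=
  ¬ T.HasT3 ∧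
  (¬ ∃ x : V, ∀ y, y ≠ x → T.MDom x y) ∧
  ∀ S : Set V, S.Nonempty → S ≠ Set.univ →
    ∃ x ∈ S, ∀ y ∈ S, y ≠ x → T.MDomIn S x y

/-- The permutation `σ` (sending every vertex to its successor) is a directed
Hamilton cycle of `T`: every vertex beats its successor, and all vertices lie
on a single cycle of `σ`. -/
def IsHamCycle (σ : Equiv.Perm V) : Prop :=
  (∀ v, T.beats v (σ v)) ∧ ∀ v w : V, ∃ n : ℕ, (⇑σ)^[n] v = w

/-- The domination property of the Hamilton cycle `σ`: every vertex
monochromatically dominates every vertex other than itself and its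
predecessor on the cycle, and no vertex monochromatically dominates its
predecessor. -/
def HamDomProp (σ : Equiv.Perm V) : Prop :=
  (∀ x y : V, y ≠ x → y ≠ σ.symm x → T.MDom x y) ∧
  ∀ x : V, ¬ T.MDom x (σ.symm x)

/-- The vertex set of the directed subpath `xCy` of the Hamilton cycle whose
successor permutation is `σ`: all vertices reachable from `x` along the cycle
no later than the first visit of `y`. -/
def PathSet (σ : Equiv.Perm V) (x y : V) : Set V :=
  {z | ∃ k : ℕ, (⇑σ)^[k] x = z ∧ ∀ j < k, (⇑σ)^[j] x ≠ y}

/-- `R^+(x)`: the vertices to which `x` sends a red edge. -/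
def Rplus (x : V) : Set V := {v | T.beats x v ∧ T.colour x v = red}
/-- `R^-(x)`: the vertices from which `x` receives a red edge. -/
def Rminus (x : V) : Set V := {v | T.beats v x ∧ T.colour v x = red}
/-- `B^+(x)`: the vertices to which `x` sends a blue edge. -/
def Bplus (x : V) : Set V := {v | T.beats x v ∧ T.colour x v = blue}
/-- `B^-(x)`: the vertices from which `x` receives a blue edge. -/
def Bminus (x : V) : Set V := {v | T.beats v x ∧ T.colour v x = blue}
/-- `R_r^+(x) = {v ∈ R^+(x) : v monochromatically dominates x in red}`. -/
def Rrplus (x : V) : Set V := {v ∈ T.Rplus x | T.Dom red v x}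
/-- `R_r^-(x) = {v ∈ R^-(x) : x monochromatically dominates v in red}`. -/
def Rrminus (x : V) : Set V := {v ∈ T.Rminus x | T.Dom red x v}
/-- `B_b^+(x) = {v ∈ B^+(x) : v monochromatically dominates x in blue}`. -/
def Bbplus (x : V) : Set V := {v ∈ T.Bplus x | T.Dom blue v x}
/-- `B_b^-(x) = {v ∈ B^-(x) : x monochromatically dominates v in blue}`. -/
def Bbminus (x : V) : Set V := {v ∈ T.Bminus x | T.Dom blue x v}

end CTournament

/-!
Fix for every vertex `v` a colour `m v` missing at `v`. An edge joining vertices with different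
missing colours then has the third colour, so a cyclic triangle meeting three classes of `m` is a
`T_3`, and a monochromatic path between vertices of different classes has the third colour.

If some colour `k₀` is missing nowhere, merge the two other colours: by the Sands–Sauer–Woodrow
theorem the resulting 2-coloured tournament has a dominating vertex, and a path avoiding `k₀`
stays inside one class and is monochromatic there.

Otherwise consider a minimal counterexample. Every vertex `y` is the only vertex not dominated by
some `σ y`, and `y → σ y`; this defines a permutation `σ`. Consecutive vertices of `σ` lie in
different classes, and a class with two vertices beats every other class through one of its
members, so at most one class is not a singleton. For singleton classes `{b}`, `{c}` with
`b → c`, the successor `x` of `c` lies in the third class, hence is beaten by both `b` and `c`,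
while `x` beats its own successor, which is `b` or `c`.
-/

namespace CTournament

/-- For `a ≠ b`, the colour different from both, since `0 + 1 + 2 = 0` in `Fin 3`. -/
def third (a b : Fin 3) : Fin 3 := -(a + b)

theorem third_comm (a b : Fin 3) : third a b = third b a := by
  rw [third, third, add_comm]

theorem eq_third : ∀ {a b c : Fin 3}, a ≠ b → c ≠ a → c ≠ b → c = third a b := by
  decide

theorem third_ne_third : ∀ {a b c : Fin 3}, a ≠ b → b ≠ c → a ≠ c → third a b ≠ third b c := by
  decide

theorem eq_or_eq_of_ne_third : ∀ {a b c : Fin 3}, a ≠ b → c ≠ third a b → c = a ∨ c = b := by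
  decide

theorem eq_of_ne_third : ∀ {c a b d : Fin 3}, c ≠ a → c ≠ b → c ≠ third d a → d ≠ a → d ≠ b →
    c = d := by
  decide

theorem eq_of_ne_of_ne_of_ne : ∀ {x a b c : Fin 3}, x ≠ a → x ≠ b → x ≠ c → a ≠ c → b ≠ c →
    a = b := by
  decide

variable {V : Type*}

section

variable (T : CTournament V)

-- `T.Dom k` and `T.MDom` unfold to `T.DomBy T.colour k` and `∃ k, T.DomBy T.colour k`.
def DomBy {C : Type*} (κ : V → V → C) (k : C) (x y : V) : Prop :=
  Relation.TransGen (fun a b => T.beats a b ∧ κ a b = k) x y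

def DominatesAll {C : Type*} (κ : V → V → C) (x : V) : Prop :=
  ∀ y, y ≠ x → ∃ k, T.DomBy κ k x y

def induce (S : Set V) : CTournament S where
  beats a b := T.beats a b
  irrefl v := T.irrefl v
  asymm a b := T.asymm a b
  total a b h := T.total a b (Subtype.coe_ne_coe.mpr h)
  colour a b := T.colour a b

variable {T} {S : Set V}

theorem DomBy.of_induce {C : Type*} {κ : V → V → C} {k : C} {x y : S}
    (h : (T.induce S).DomBy (fun a b => κ a b) k x y) : T.DomBy κ k x y :=
  Relation.TransGen.lift Subtype.val (fun _ _ hab => hab) _ _ h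

theorem MDom.mdomIn_of_induce {x y : S} (h : (T.induce S).MDom x y) : T.MDomIn S x y := by
  obtain ⟨k, h⟩ := h
  exact ⟨k, Relation.TransGen.lift Subtype.val (fun a b hab => ⟨a.2, b.2, hab⟩) _ _ h⟩

theorem MDomIn.mdom {x y : V} (h : T.MDomIn S x y) : T.MDom x y := by
  obtain ⟨k, h⟩ := h
  exact ⟨k, Relation.TransGen.mono (fun _ _ hab => hab.2.2) _ _ h⟩

theorem HasT3.of_induce (h : (T.induce S).HasT3) : T.HasT3 := by
  obtain ⟨a, b, c, h⟩ := h
  exact ⟨a, b, c, h⟩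

theorem IncidentColour.of_induce {v : S} {k : Fin 3} (h : (T.induce S).IncidentColour v k) :
    T.IncidentColour v k := by
  obtain ⟨w, h⟩ := h
  exact ⟨w, h⟩

end

universe u in
theorem induction_on_induce {P : (V : Type u) → CTournament V → Prop}
    (step : ∀ (V : Type u) [Finite V] (T : CTournament V),
      (∀ S : Set V, S ≠ Set.univ → P S (T.induce S)) → P V T)
    {V : Type u} [Finite V] (T : CTournament V) : P V T := by
  induction h : Nat.card V using Nat.strong_induction_on generalizing V with
  | _ n ih =>
    refine step V T fun S hS => ih _ ?_ _ rfl
    obtain ⟨x, hx⟩ := (Set.ne_univ_iff_exists_notMem S).mp hS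
    exact h ▸ Finite.card_subtype_lt hx

variable {T : CTournament V}

theorem ne_of_beats {a b : V} (h : T.beats a b) : a ≠ b :=
  fun hab => T.irrefl a (hab ▸ h)

section SandsSauerWoodrow

variable {κ : V → V → Bool}

theorem exists_dominatesAll_bool_of_not_domBy {u v₀ : V} (hu : u ≠ v₀) (hv₀u : T.beats v₀ u)
    (hreach : ∀ y, y ≠ u → y ≠ v₀ → ∃ β, T.DomBy κ β u y) (hv₀ : ∀ β, ¬ T.DomBy κ β u v₀)
    (ih : ∀ S : Set V, S.Nonempty → S ≠ Set.univ →
      ∃ x : S, (T.induce S).DominatesAll (fun a b => κ a b) x) :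
    ∃ x, T.DominatesAll κ x := by
  set β := κ v₀ u
  set S : Set V := insert v₀ {t | t ≠ u ∧ T.DomBy κ (!β) u t}
  have huS : u ∉ S := by
    rintro (h | h)
    exacts [hu h, h.1 rfl]
  have hout : ∀ y, y ≠ u → y ∉ S → T.DomBy κ β u y := by
    intro y hyu hyS
    obtain ⟨γ, hγ⟩ := hreach y hyu fun h => hyS (h ▸ Set.mem_insert _ _)
    by_cases hγβ : γ = β
    · exact hγβ ▸ hγ
    · exact absurd (Or.inr ⟨hyu, Bool.eq_not_iff.mpr hγβ ▸ hγ⟩) hyS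
  obtain ⟨⟨w, hwS⟩, hw⟩ := ih S ⟨v₀, Set.mem_insert _ _⟩ fun h => huS (h ▸ Set.mem_univ u)
  -- `w` reaches `v₀` inside `S`; the last edge of that path leaves a vertex that `u` reaches in
  -- colour `!β`, so the path has colour `β`, as does the edge `v₀ → u`.
  have hwu : T.DomBy κ β w u := by
    by_cases hwv : w = v₀
    · exact hwv ▸ .single ⟨hv₀u, rfl⟩
    obtain ⟨γ, hγ⟩ := hw ⟨v₀, Set.mem_insert _ _⟩ fun h => hwv (congrArg Subtype.val h).symm
    have hγβ : γ = β := by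
      obtain ⟨⟨a, haS⟩, -, ha⟩ := Relation.TransGen.tail'_iff.mp hγ
      by_contra hne
      obtain ⟨-, hua⟩ := haS.resolve_left fun h => T.irrefl v₀ (h ▸ ha.1)
      exact hv₀ _ (hua.tail ⟨ha.1, ha.2.trans (Bool.eq_not_iff.mpr hne)⟩)
    exact (hγβ ▸ hγ.of_induce).tail ⟨hv₀u, rfl⟩
  refine ⟨w, fun y hyw => ?_⟩
  by_cases hyu : y = u
  · exact ⟨β, hyu ▸ hwu⟩
  by_cases hyS : y ∈ S
  · obtain ⟨γ, hγ⟩ := hw ⟨y, hyS⟩ fun h => hyw (congrArg Subtype.val h)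
    exact ⟨γ, hγ.of_induce⟩
  · exact ⟨β, hwu.trans (hout y hyu hyS)⟩

theorem exists_dominatesAll_bool_of_induce [Nonempty V]
    (ih : ∀ S : Set V, S.Nonempty → S ≠ Set.univ →
      ∃ x : S, (T.induce S).DominatesAll (fun a b => κ a b) x) :
    ∃ x, T.DominatesAll κ x := by
  obtain ⟨v₀⟩ := ‹Nonempty V›
  by_cases hsingle : ∀ y, y = v₀
  · exact ⟨v₀, fun y hy => absurd (hsingle y) hy⟩
  push Not at hsingle
  obtain ⟨⟨u, hu⟩, hu'⟩ := ih {v₀}ᶜ hsingle (by simp)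
  have hreach : ∀ y, y ≠ u → y ≠ v₀ → ∃ β, T.DomBy κ β u y := fun y hyu hyv =>
    (hu' ⟨y, hyv⟩ fun h => hyu (congrArg Subtype.val h)).imp fun _ h => h.of_induce
  by_cases hv₀ : ∃ β, T.DomBy κ β u v₀
  · refine ⟨u, fun y hyu => ?_⟩
    by_cases hyv : y = v₀
    · exact hyv ▸ hv₀
    · exact hreach y hyu hyv
  push Not at hv₀
  have hv₀u : T.beats v₀ u :=
    (T.total v₀ u (Ne.symm hu)).resolve_right fun h => hv₀ _ (.single ⟨h, rfl⟩)
  exact exists_dominatesAll_bool_of_not_domBy hu hv₀u hreach hv₀ ih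

end SandsSauerWoodrow

theorem exists_dominatesAll_bool [Finite V] [Nonempty V] (T : CTournament V)
    (κ : V → V → Bool) : ∃ x, T.DominatesAll κ x :=
  induction_on_induce (P := fun V T => Nonempty V → ∀ κ : V → V → Bool, ∃ x, T.DominatesAll κ x)
    (fun _ _ _ ih _ _ => exists_dominatesAll_bool_of_induce fun S hS hSu =>
      have := hS.to_subtype
      ih S hSu this _)
    T ‹_› κ

def IsMissing (T : CTournament V) (m : V → Fin 3) : Prop :=
  ∀ v, ¬ T.IncidentColour v (m v)

variable {m : V → Fin 3} {σ : Equiv.Perm V}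

namespace IsMissing

variable {a b c : V} {k : Fin 3}

theorem colour_ne_left (hm : T.IsMissing m) (h : T.beats a b) : T.colour a b ≠ m a :=
  fun hc => hm a ⟨b, .inl ⟨h, hc⟩⟩

theorem colour_ne_right (hm : T.IsMissing m) (h : T.beats a b) : T.colour a b ≠ m b :=
  fun hc => hm b ⟨a, .inr ⟨h, hc⟩⟩

theorem colour_eq_third (hm : T.IsMissing m) (h : T.beats a b) (hab : m a ≠ m b) :
    T.colour a b = third (m a) (m b) :=
  eq_third hab (hm.colour_ne_left h) (hm.colour_ne_right h)

theorem ne_left_of_dom (hm : T.IsMissing m) (h : T.Dom k a b) : k ≠ m a := by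
  obtain ⟨c, hac, -⟩ := Relation.TransGen.head'_iff.mp h
  exact hac.2 ▸ hm.colour_ne_left hac.1

theorem ne_right_of_dom (hm : T.IsMissing m) (h : T.Dom k a b) : k ≠ m b := by
  obtain ⟨c, -, hcb⟩ := Relation.TransGen.tail'_iff.mp h
  exact hcb.2 ▸ hm.colour_ne_right hcb.1

theorem dom_third (hm : T.IsMissing m) (h : T.MDom a b) (hab : m a ≠ m b) :
    T.Dom (third (m a) (m b)) a b := by
  obtain ⟨k, hk⟩ := h
  rwa [← eq_third hab (hm.ne_left_of_dom hk) (hm.ne_right_of_dom hk)]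

theorem beats_trans (hm : T.IsMissing m) (hT3 : ¬ T.HasT3) (hab : T.beats a b)
    (hbc : T.beats b c) (h₁ : m a ≠ m b) (h₂ : m b ≠ m c) (h₃ : m a ≠ m c) : T.beats a c := by
  refine (T.total a c fun h => h₃ (h ▸ rfl)).resolve_right fun hca =>
    hT3 ⟨a, b, c, hab, hbc, hca, ?_, ?_, ?_⟩ <;>
  simp only [hm.colour_eq_third hab h₁, hm.colour_eq_third hbc h₂,
    hm.colour_eq_third hca h₃.symm]
  · exact third_ne_third h₁ h₂ h₃
  · exact third_ne_third h₂ h₃.symm h₁.symm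
  · exact (third_ne_third h₃.symm h₁ h₂.symm).symm

/-- An edge avoiding the colour `k₀`, which is missing nowhere, joins two vertices missing the
same colour, and its colour is then determined. -/
theorem class_eq_and_dom_of_domBy_false (hm : T.IsMissing m) {k₀ : Fin 3} (hk₀ : ∀ v, m v ≠ k₀)
    (h : T.DomBy (fun a b => decide (T.colour a b = k₀)) false a b) :
    m b = m a ∧ T.Dom (third (m a) k₀) a b := by
  induction h with
  | single hab =>
    have hk := of_decide_eq_false hab.2
    refine ⟨(eq_of_ne_of_ne_of_ne (hm.colour_ne_left hab.1) (hm.colour_ne_right hab.1) hk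
      (hk₀ _) (hk₀ _)).symm, .single ⟨hab.1, ?_⟩⟩
    exact eq_third (hk₀ _) (hm.colour_ne_left hab.1) hk
  | tail _ hbc ih =>
    have hk := of_decide_eq_false hbc.2
    have hcls := eq_of_ne_of_ne_of_ne (hm.colour_ne_left hbc.1) (hm.colour_ne_right hbc.1) hk
      (hk₀ _) (hk₀ _)
    refine ⟨hcls ▸ ih.1, ih.2.tail ⟨hbc.1, ?_⟩⟩
    exact ih.1 ▸ eq_third (hk₀ _) (hm.colour_ne_left hbc.1) hk

theorem exists_dominatesAll_of_ne [Finite V] [Nonempty V] (hm : T.IsMissing m) {k₀ : Fin 3}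
    (hk₀ : ∀ v, m v ≠ k₀) : ∃ x, T.DominatesAll T.colour x := by
  obtain ⟨x, hx⟩ := exists_dominatesAll_bool T fun a b => decide (T.colour a b = k₀)
  refine ⟨x, fun y hy => ?_⟩
  obtain ⟨β, hβ⟩ := hx y hy
  cases β
  · exact ⟨_, (hm.class_eq_and_dom_of_domBy_false hk₀ hβ).2⟩
  · exact ⟨k₀, Relation.TransGen.mono (fun _ _ h => ⟨h.1, of_decide_eq_true h.2⟩) _ _ hβ⟩

-- `v` reaches `t` in colour `third (m v) (m t)`, and must not reach its predecessor.
theorem not_dom_third_symm_apply (hm : T.IsMissing m) (hH : T.HamDomProp σ) {t v : V}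
    (ht : t ≠ σ.symm v) (htv : m t ≠ m v) : ¬ T.Dom (third (m v) (m t)) t (σ.symm v) :=
  fun h => hH.2 v ⟨_, (hm.dom_third (hH.1 v t (fun e => htv (e ▸ rfl)) ht) htv.symm).trans h⟩

theorem symm_apply_beats_of_class_eq (hm : T.IsMissing m) (hH : T.HamDomProp σ) {v b : V}
    (hv : m (σ.symm v) = m v) (hb : m b ≠ m v) : T.beats (σ.symm v) b := by
  have hbu : b ≠ σ.symm v := fun h => hb (h ▸ hv)
  refine (T.total _ _ hbu.symm).resolve_right fun hbu' =>
    hm.not_dom_third_symm_apply hH hbu hb (.single ⟨hbu', ?_⟩)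
  rw [hm.colour_eq_third hbu' (by rwa [hv]), hv, third_comm]

end IsMissing

theorem beats_symm_apply (hσ : ∀ v, T.beats v (σ v)) (x : V) : T.beats (σ.symm x) x := by
  simpa using hσ (σ.symm x)

theorem IsMissing.class_symm_symm_apply_eq (hm : T.IsMissing m) (hσ : ∀ v, T.beats v (σ v))
    (hH : T.HamDomProp σ) {v : V} (hv : m (σ.symm v) = m v) :
    m (σ.symm (σ.symm v)) = m (σ.symm v) := by
  by_contra hne
  exact T.asymm _ _ (beats_symm_apply hσ _)
    (hm.symm_apply_beats_of_class_eq hH hv (by rwa [← hv]))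

namespace MinimalCex

theorem exists_almost_dominating (hmin : T.MinimalCex) (y : V) :
    ∃ x, T.beats y x ∧ (∀ z, z ≠ y → z ≠ x → T.MDom x z) ∧ ¬ T.MDom x y := by
  obtain ⟨z, hz⟩ : ∃ z, z ≠ y := by
    by_contra! h
    exact hmin.2.1 ⟨y, fun z hz => absurd (h z) hz⟩
  obtain ⟨x, hxy, hx⟩ := hmin.2.2 {y}ᶜ ⟨z, hz⟩ (by simp)
  have hx' : ∀ z, z ≠ y → z ≠ x → T.MDom x z := fun z hzy hzx => (hx z hzy hzx).mdom
  have hxy' : ¬ T.MDom x y := fun h =>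
    hmin.2.1 ⟨x, fun z hzx => by
      by_cases hzy : z = y
      exacts [hzy ▸ h, hx' z hzy hzx]⟩
  exact ⟨x, (T.total y x (Ne.symm hxy)).resolve_right fun h => hxy' ⟨_, .single ⟨h, rfl⟩⟩,
    hx', hxy'⟩

theorem exists_hamDomProp [Finite V] (hmin : T.MinimalCex) :
    ∃ σ : Equiv.Perm V, (∀ v, T.beats v (σ v)) ∧ T.HamDomProp σ := by
  choose w hbeats hdom hndom using hmin.exists_almost_dominating
  have hinj : Function.Injective w := by
    intro y₁ y₂ he
    by_contra hne
    have hy₂ : y₂ ≠ w y₁ := fun h => T.irrefl y₂ (by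
      have := hbeats y₂
      rwa [← he, ← h] at this)
    exact hndom y₂ (he ▸ hdom y₁ y₂ (Ne.symm hne) hy₂)
  set σ := Equiv.ofBijective w (Finite.injective_iff_bijective.mp hinj)
  have hw : ∀ x, w (σ.symm x) = x := Equiv.ofBijective_apply_symm_apply _ _
  refine ⟨σ, hbeats, fun x y hyx hyp => ?_, fun x => ?_⟩
  · simpa [hw] using hdom (σ.symm x) y hyp (by rwa [hw])
  · simpa [hw] using hndom (σ.symm x)

theorem eq_univ_of_symm_apply_mem (hmin : T.MinimalCex) (hσ : ∀ v, T.beats v (σ v))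
    (hH : T.HamDomProp σ) {S : Set V} (hS : S.Nonempty) (hpred : ∀ x ∈ S, σ.symm x ∈ S) :
    S = Set.univ := by
  by_contra hSu
  obtain ⟨d, hd, hdom⟩ := hmin.2.2 S hS hSu
  exact hH.2 d (hdom _ (hpred d hd) (ne_of_beats (beats_symm_apply hσ d))).mdom

/-- If `v` shares the class of its predecessor, so does that predecessor; hence the set of such
vertices, and then the class of `v`, are closed under predecessors, so both are everything. -/
theorem class_symm_apply_ne (hmin : T.MinimalCex) (hm : T.IsMissing m)
    (hσ : ∀ v, T.beats v (σ v)) (hH : T.HamDomProp σ) (hsurj : Function.Surjective m)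
    (v : V) : m (σ.symm v) ≠ m v := by
  intro hv
  have hall : ∀ x, m (σ.symm x) = m x := Set.eq_univ_iff_forall.mp <|
    hmin.eq_univ_of_symm_apply_mem hσ hH ⟨v, hv⟩ fun x hx => hm.class_symm_symm_apply_eq hσ hH hx
  have hclass : ∀ x, m x = m v := Set.eq_univ_iff_forall.mp <|
    hmin.eq_univ_of_symm_apply_mem hσ hH (S := {x | m x = m v}) ⟨v, rfl⟩ fun x hx =>
      (hall x).trans hx
  obtain ⟨x, hx⟩ := hsurj (m v + 1)
  exact absurd (add_eq_left.mp (hx.symm.trans (hclass x))) (by decide)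

end MinimalCex

namespace IsMissing

theorem colour_to_symm_apply (hm : T.IsMissing m) (hH : T.HamDomProp σ)
    (hpred : ∀ x, m (σ.symm x) ≠ m x) {t v : V} (ht : T.beats t (σ.symm v)) (htv : m t ≠ m v) :
    T.colour t (σ.symm v) = m v := by
  have hne : T.colour t (σ.symm v) ≠ third (m v) (m t) := fun h =>
    hm.not_dom_third_symm_apply hH (ne_of_beats ht) htv (.single ⟨ht, h⟩)
  exact eq_of_ne_third (hm.colour_ne_left ht) (hm.colour_ne_right ht) hne htv.symm (hpred v).symm

theorem exists_class_beats_symm_apply (hm : T.IsMissing m) (hH : T.HamDomProp σ)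
    (hpred : ∀ x, m (σ.symm x) ≠ m x) {v w : V} (hwv : w ≠ v) (hmw : m w = m v) :
    ∃ z, m z = m v ∧ T.beats z (σ.symm v) := by
  by_contra! hz
  have hwu : σ.symm v ≠ w := fun h => hpred v (h ▸ hmw)
  obtain ⟨k, hk⟩ := hH.1 w (σ.symm v) hwu fun h => hwv (σ.symm.injective h).symm
  obtain ⟨a, -, ha, hak⟩ := Relation.TransGen.tail'_iff.mp hk
  have hav : m a ≠ m v := fun h => hz a h ha
  apply hm.ne_left_of_dom hk
  rw [← hak, hm.colour_to_symm_apply hH hpred ha hav, hmw]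

theorem exists_class_beats_symm_apply_class (hm : T.IsMissing m) (hH : T.HamDomProp σ)
    (hpred : ∀ x, m (σ.symm x) ≠ m x) {v w : V} (hwv : w ≠ v) (hmw : m w = m v) :
    ∃ z, m z = m v ∧ ∀ b, m b = m (σ.symm v) → T.beats z b := by
  obtain ⟨z, hzv, hzu⟩ := hm.exists_class_beats_symm_apply hH hpred hwv hmw
  refine ⟨z, hzv, fun b hb => ?_⟩
  by_cases hbu : b = σ.symm v
  · exact hbu ▸ hzu
  have hbv : m b ≠ m v := hb ▸ hpred v
  refine (T.total z b fun h => hbv (h ▸ hzv)).resolve_right fun hbz =>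
    hm.not_dom_third_symm_apply hH hbu hbv (.tail (.single ⟨hbz, ?_⟩) ⟨hzu, ?_⟩)
  · rw [hm.colour_eq_third hbz (by rwa [hzv]), hzv, third_comm]
  · rw [hm.colour_eq_third hzu (by rw [hzv]; exact (hpred v).symm), hzv, hb]

/-- Unless `k` is the class of `σ.symm v`, the predecessor of the vertex `z₁` beating that class
lies in class `k`, and the previous lemma applies at `z₁`. -/
theorem exists_class_beats_class (hm : T.IsMissing m) (hσ : ∀ v, T.beats v (σ v))
    (hH : T.HamDomProp σ) (hpred : ∀ x, m (σ.symm x) ≠ m x) {v w : V} (hwv : w ≠ v)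
    (hmw : m w = m v) {k : Fin 3} (hk : k ≠ m v) :
    ∃ z, m z = m v ∧ ∀ b, m b = k → T.beats z b := by
  obtain ⟨z₁, hz₁v, hz₁⟩ := hm.exists_class_beats_symm_apply_class hH hpred hwv hmw
  by_cases hku : k = m (σ.symm v)
  · exact ⟨z₁, hz₁v, hku ▸ hz₁⟩
  have hz₁k : m (σ.symm z₁) = k := by
    have h₁ : m (σ.symm z₁) ≠ m v := hz₁v ▸ hpred z₁
    have h₂ : m (σ.symm z₁) ≠ m (σ.symm v) := fun h =>
      T.asymm _ _ (beats_symm_apply hσ z₁) (hz₁ _ h)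
    exact (eq_third (hpred v).symm h₁ h₂).trans (eq_third (hpred v).symm hk hku).symm
  have hvz₁ : v ≠ z₁ := by
    rintro rfl
    exact T.asymm _ _ (beats_symm_apply hσ v) (hz₁ _ rfl)
  obtain ⟨z, hzz₁, hz⟩ := hm.exists_class_beats_symm_apply_class hH hpred hvz₁ hz₁v.symm
  exact ⟨z, hzz₁.trans hz₁v, hz₁k ▸ hz⟩

theorem class_eq_of_nontrivial (hm : T.IsMissing m) (hσ : ∀ v, T.beats v (σ v))
    (hH : T.HamDomProp σ) (hpred : ∀ x, m (σ.symm x) ≠ m x) {v₁ w₁ v₂ w₂ : V}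
    (h₁ : w₁ ≠ v₁) (hm₁ : m w₁ = m v₁) (h₂ : w₂ ≠ v₂) (hm₂ : m w₂ = m v₂) : m v₁ = m v₂ := by
  by_contra hne
  obtain ⟨z₁, hz₁, h₁₂⟩ := hm.exists_class_beats_class hσ hH hpred h₁ hm₁ (Ne.symm hne)
  obtain ⟨z₂, hz₂, h₂₁⟩ := hm.exists_class_beats_class hσ hH hpred h₂ hm₂ hne
  exact T.asymm _ _ (h₁₂ z₂ hz₂) (h₂₁ z₁ hz₁)

theorem false_of_beats_of_singleton_classes (hm : T.IsMissing m) (hT3 : ¬ T.HasT3)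
    (hσ : ∀ v, T.beats v (σ v)) (hpred : ∀ x, m (σ.symm x) ≠ m x) {b c : V}
    (hbc : T.beats b c) (hmbc : m b ≠ m c) (hb : ∀ x, m x = m b → x = b)
    (hc : ∀ x, m x = m c → x = c) : False := by
  have hsucc : ∀ x, m (σ x) ≠ m x := fun x => by simpa using (hpred (σ x)).symm
  set x := σ c
  have hxb : m x ≠ m b := fun h => T.asymm _ _ hbc (hb x h ▸ hσ c)
  have hbx : T.beats b x := hm.beats_trans hT3 hbc (hσ c) hmbc (hsucc c).symm hxb.symm
  rcases eq_or_eq_of_ne_third hmbc (eq_third hmbc hxb (hsucc c) ▸ hsucc x) with h | h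
  · have hxb' := hσ x
    rw [hb _ h] at hxb'
    exact T.asymm _ _ hbx hxb'
  · have hxc := hσ x
    rw [hc _ h] at hxc
    exact T.asymm _ _ (hσ c) hxc

end IsMissing

theorem exists_two_singleton_fibres (hsurj : Function.Surjective m)
    (h : ∀ v₁ w₁ v₂ w₂, w₁ ≠ v₁ → m w₁ = m v₁ → w₂ ≠ v₂ → m w₂ = m v₂ → m v₁ = m v₂) :
    ∃ b c, m b ≠ m c ∧ (∀ x, m x = m b → x = b) ∧ (∀ x, m x = m c → x = c) := by
  obtain ⟨k, hk⟩ : ∃ k, ∀ x y, y ≠ x → m y = m x → m x = k := by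
    by_cases hbig : ∃ v w, w ≠ v ∧ m w = m v
    · obtain ⟨v, w, hwv, hmw⟩ := hbig
      exact ⟨m v, fun x y hyx hmy => h x y v w hyx hmy hwv hmw⟩
    · push Not at hbig
      exact ⟨0, fun x y hyx hmy => absurd hmy (hbig x y hyx)⟩
  have hk' : ∀ k : Fin 3, k + 1 ≠ k ∧ k + 2 ≠ k ∧ k + 1 ≠ k + 2 := by decide
  obtain ⟨b, hb⟩ := hsurj (k + 1)
  obtain ⟨c, hc⟩ := hsurj (k + 2)
  refine ⟨b, c, hb ▸ hc ▸ (hk' k).2.2, fun x hx => ?_, fun x hx => ?_⟩ <;> by_contra hne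
  · exact (hk' k).1 (hb ▸ hk b x hne hx)
  · exact (hk' k).2.1 (hc ▸ hk c x hne hx)

theorem MinimalCex.false_of_surjective [Finite V] (hmin : T.MinimalCex) (hm : T.IsMissing m)
    (hsurj : Function.Surjective m) : False := by
  obtain ⟨σ, hσ, hH⟩ := hmin.exists_hamDomProp
  have hpred := hmin.class_symm_apply_ne hm hσ hH hsurj
  obtain ⟨b, c, hbc, hb, hc⟩ := exists_two_singleton_fibres hsurj fun _ _ _ _ =>
    hm.class_eq_of_nontrivial hσ hH hpred
  rcases T.total b c fun h => hbc (h ▸ rfl) with h | h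
  · exact hm.false_of_beats_of_singleton_classes hmin.1 hσ hpred h hbc hb hc
  · exact hm.false_of_beats_of_singleton_classes hmin.1 hσ hpred h hbc.symm hc hb

theorem minimalCex_of_induce (hT3 : ¬ T.HasT3) (hno : ¬ ∃ x, T.DominatesAll T.colour x)
    (ih : ∀ S : Set V, S.Nonempty → S ≠ Set.univ →
      ∃ x : S, (T.induce S).DominatesAll (T.induce S).colour x) : T.MinimalCex := by
  refine ⟨hT3, hno, fun S hS hSu => ?_⟩
  obtain ⟨x, hx⟩ := ih S hS hSu
  exact ⟨x, x.2, fun y hy hyx =>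
    MDom.mdomIn_of_induce (hx ⟨y, hy⟩ fun h => hyx (congrArg Subtype.val h))⟩

theorem exists_dominatesAll_of_not_hasT3 [Finite V] [Nonempty V] (T : CTournament V)
    (hcol : ∀ v, ∃ k, ¬ T.IncidentColour v k) (hT3 : ¬ T.HasT3) :
    ∃ x, T.DominatesAll T.colour x :=
  induction_on_induce (P := fun V T => Nonempty V → (∀ v, ∃ k, ¬ T.IncidentColour v k) →
      ¬ T.HasT3 → ∃ x, T.DominatesAll T.colour x)
    (fun _ _ T ih _ hcol hT3 => by
      obtain ⟨m, hm⟩ : ∃ m, T.IsMissing m := ⟨_, fun v => (hcol v).choose_spec⟩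
      by_cases hsurj : Function.Surjective m
      · by_contra hno
        refine (minimalCex_of_induce hT3 hno fun S hS hSu => ?_).false_of_surjective hm hsurj
        have := hS.to_subtype
        exact ih S hSu this (fun v => (hcol v).imp fun _ h h' => h h'.of_induce)
          fun h => hT3 h.of_induce
      · simp only [Function.Surjective, not_forall, not_exists] at hsurj
        obtain ⟨k₀, hk₀⟩ := hsurj
        exact hm.exists_dominatesAll_of_ne hk₀)
    T ‹_› hcol hT3

end CTournament

/-- Every finite 3-coloured tournament in which each vertex is
incident with edges of at most two of the three colours contains either a `T_3`
or a vertex that monochromatically dominates every other vertex. -/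
theorem t3_or_dominating_vertex {V : Type*} [Fintype V] [Nonempty V]
    (T : CTournament V)
    (hcol : ∀ v : V, ∃ c : Fin 3, ¬ T.IncidentColour v c) :
    T.HasT3 ∨ ∃ x : V, ∀ y, y ≠ x → T.MDom x y :=
  or_iff_not_imp_left.mpr (T.exists_dominatesAll_of_not_hasT3 hcol)
end

section
/- Let D be a minimal counterexample and C its Hamilton cycle with the stated domination property. Suppose x is a vertex of D such that the edges x^- → x and x → x^+ of C have distinct colours. Then the edge between x^- and x^+ is directed from x^- to x^+, and x^+ monochromatically dominates x^- in the third colour (the colour different from the colours of x^- → x and x → x^+) but in neither of the other two colours. -/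
/-- In a minimal counterexample with Hamilton cycle `σ`, if the
cycle edges `x⁻ → x` and `x → x⁺` have distinct colours, then `x⁻` beats `x⁺`, and
`x⁺` monochromatically dominates `x⁻` in the third colour but in neither of the
two colours of these cycle edges. -/
theorem twoCedges {V : Type*} [Fintype V] (T : CTournament V)
    (h : T.MinimalCex) (σ : Equiv.Perm V)
    (hσ : T.IsHamCycle σ) (hprop : T.HamDomProp σ)
    (x : V) (hne : T.colour (σ.symm x) x ≠ T.colour x (σ x)) :
    T.beats (σ.symm x) (σ x) ∧
    ∀ c : Fin 3, (T.Dom c (σ x) (σ.symm x) ↔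
      c ≠ T.colour (σ.symm x) x ∧ c ≠ T.colour x (σ x)) := by
  obtain ⟨hT3, -, -⟩ := h
  obtain ⟨hbeat, -⟩ := hσ
  obtain ⟨hdom, hndom⟩ := hprop
  have hxp : σ x ≠ x := by
    intro h1
    apply hne
    have h2 : σ.symm x = x := (congrArg σ.symm h1).symm.trans (σ.symm_apply_apply x)
    simp only [h1, h2]
  have hxm : σ.symm x ≠ x := fun h1 =>
    hxp ((congrArg σ h1).symm.trans (σ.apply_symm_apply x))
  have hbm : T.beats (σ.symm x) x := by
    have := hbeat (σ.symm x); rwa [Equiv.apply_symm_apply] at this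
  have hbp : T.beats x (σ x) := hbeat x
  have hmp : σ.symm x ≠ σ x := by
    intro h1
    have h2 : σ (σ x) = x := by rw [← h1, Equiv.apply_symm_apply]
    apply hndom (σ x)
    rw [Equiv.symm_apply_apply]
    have hb2 : T.beats (σ x) x := by have := hbeat (σ x); rwa [h2] at this
    exact ⟨_, Relation.TransGen.single ⟨hb2, rfl⟩⟩
  have noDomA : ¬ T.Dom (T.colour (σ.symm x) x) (σ x) (σ.symm x) := by
    intro hd
    apply hndom (σ x)
    rw [Equiv.symm_apply_apply]
    exact ⟨_, Relation.TransGen.tail hd ⟨hbm, rfl⟩⟩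
  have noDomB : ¬ T.Dom (T.colour x (σ x)) (σ x) (σ.symm x) := by
    intro hd
    apply hndom x
    exact ⟨_, Relation.TransGen.head ⟨hbp, rfl⟩ hd⟩
  obtain ⟨c0, hc0⟩ : T.MDom (σ x) (σ.symm x) := by
    apply hdom (σ x) (σ.symm x) hmp
    rw [Equiv.symm_apply_apply]
    exact hxm
  have hc0a : c0 ≠ T.colour (σ.symm x) x := fun hh => noDomA (hh ▸ hc0)
  have hc0b : c0 ≠ T.colour x (σ x) := fun hh => noDomB (hh ▸ hc0)
  constructor
  · rcases T.total (σ.symm x) (σ x) hmp with h1 | h1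
    · exact h1
    · exfalso
      have hd : T.colour (σ x) (σ.symm x) = T.colour (σ.symm x) x ∨
          T.colour (σ x) (σ.symm x) = T.colour x (σ x) := by
        by_contra hcon
        push_neg at hcon
        exact hT3 ⟨σ.symm x, x, σ x, hbm, hbp, h1, hne, hcon.2.symm, hcon.1.symm⟩
      rcases hd with hd | hd
      · exact noDomA (hd ▸ Relation.TransGen.single ⟨h1, rfl⟩)
      · exact noDomB (hd ▸ Relation.TransGen.single ⟨h1, rfl⟩)
  · intro c
    constructor
    · intro hd
      constructor
      · intro hh; exact noDomA (hh ▸ hd)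
      · intro hh; exact noDomB (hh ▸ hd)
    · rintro ⟨h1, h2⟩
      have : c = c0 := by omega
      rw [this]; exact hc0
end

section
/- Let D be a minimal counterexample and C its Hamilton cycle with the stated domination property. Then for every vertex z of D it is not the case that all edges of C of the form z^{+2k} → z^{+2k+1} (k a natural number) are red and all edges of C of the form z^{+2k+1} → z^{+2k+2} are blue; in other words, the edges of C cannot alternate between two colours. -/
/-- Auxiliary: the alternating colour pattern along the cycle. -/
def altC : ℕ → Fin 3 := fun i => if i % 2 = 0 then CTournament.red else CTournament.blue

lemma altC_add_two (i : ℕ) : altC (i + 2) = altC i := by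
  unfold altC
  have h : (i + 2) % 2 = i % 2 := by omega
  rw [h]

lemma altC_ne_green (i : ℕ) : altC i ≠ CTournament.green := by
  unfold altC
  rcases Nat.mod_two_eq_zero_or_one i with h | h <;> simp [h] <;> decide

lemma altC_succ_ne (i : ℕ) : altC i ≠ altC (i + 1) := by
  unfold altC
  rcases Nat.mod_two_eq_zero_or_one i with h | h <;>
    · have h1 : (i + 1) % 2 = 1 - i % 2 := by omega
      simp [h, h1] <;> decide

lemma altC_tri (i : ℕ) (c : Fin 3) : c = altC i ∨ c = altC (i + 1) ∨ c = CTournament.green := by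
  unfold altC
  rcases Nat.mod_two_eq_zero_or_one i with h | h <;>
    · have h1 : (i + 1) % 2 = 1 - i % 2 := by omega
      simp [h, h1]
      fin_cases c <;> simp [CTournament.red, CTournament.blue, CTournament.green]

lemma altC_even_shift (i m : ℕ) (h : m % 2 = 0) : altC (i + m) = altC i := by
  unfold altC
  have h1 : (i + m) % 2 = i % 2 := by omega
  rw [h1]

/-- In a minimal counterexample with Hamilton cycle `σ`, the
edges of the cycle cannot alternate between two colours: for no vertex `z` are
all edges `z⁺²ᵏ → z⁺²ᵏ⁺¹` red and all edges `z⁺²ᵏ⁺¹ → z⁺²ᵏ⁺²` blue. -/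
theorem no_two_colour_alternation {V : Type*} [Fintype V] (T : CTournament V)
    (h : T.MinimalCex) (σ : Equiv.Perm V)
    (hσ : T.IsHamCycle σ) (hprop : T.HamDomProp σ) :
    ∀ z : V, ¬ (∀ k : ℕ,
      T.colour ((⇑σ)^[2*k] z) ((⇑σ)^[2*k+1] z) = CTournament.red ∧
      T.colour ((⇑σ)^[2*k+1] z) ((⇑σ)^[2*k+2] z) = CTournament.blue) := by
  intro z halt
  classical
  obtain ⟨hbeats_succ, horbit⟩ := hσ
  obtain ⟨hdom, hnopred⟩ := hprop
  have hT3 := h.1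
  set v : ℕ → V := fun i => (⇑σ)^[i] z with hv
  have hzper : z ∈ Function.periodicPts ⇑σ := by
    obtain ⟨m, hm⟩ := horbit (σ z) z
    exact ⟨m + 1, Nat.succ_pos m, by
      show (⇑σ)^[m+1] z = z
      rw [Function.iterate_succ_apply]
      exact hm⟩
  set n := Function.minimalPeriod ⇑σ z with hn
  have hnpos : 0 < n := Function.minimalPeriod_pos_of_mem_periodicPts hzper
  have hper0 : (⇑σ)^[n] z = z := Function.iterate_minimalPeriod
  have hper : ∀ i, v (i + n) = v i := by
    intro i
    simp only [hv]
    rw [Function.iterate_add_apply, hper0]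
  have hperMul : ∀ i m, v (i + m * n) = v i := by
    intro i m
    induction m with
    | zero => simp
    | succ k ih =>
      have e : i + (k+1) * n = (i + k * n) + n := by ring
      rw [e, hper, ih]
  have hsucc : ∀ i, v (i + 1) = σ (v i) := by
    intro i
    simp only [hv]
    exact Function.iterate_succ_apply' (⇑σ) i z
  have hbeat : ∀ i, T.beats (v i) (v (i + 1)) := by
    intro i
    rw [hsucc i]
    exact hbeats_succ (v i)
  have hsymm : ∀ i, σ.symm (v (i + 1)) = v i := by
    intro i
    rw [hsucc i]
    exact Equiv.symm_apply_apply σ (v i)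
  have hcolv : ∀ i, T.colour (v i) (v (i + 1)) = altC i := by
    intro i
    rcases Nat.even_or_odd i with he | ho
    · obtain ⟨k, hk⟩ := he
      have e : i = 2 * k := by omega
      rw [e]
      have e2 : altC (2 * k) = CTournament.red := by
        unfold altC
        simp [Nat.mul_mod_right]
      rw [e2]
      simp only [hv]
      exact (halt k).1
    · obtain ⟨k, hk⟩ := ho
      rw [hk]
      have e2 : altC (2 * k + 1) = CTournament.blue := by
        unfold altC
        have h3 : (2 * k + 1) % 2 = 1 := by omega
        simp [h3]
      rw [e2]
      simp only [hv]
      exact (halt k).2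
  rcases Nat.even_or_odd n with hev | hodd
  · -- n even
    obtain ⟨b, hb⟩ := hev
    by_cases hn2 : n = 2
    · have h01 := hbeat 0
      have h12 := hbeat 1
      have e : v (1 + 1) = v 0 := by
        rw [show 1 + 1 = 0 + n by omega]
        exact hper 0
      rw [e] at h12
      exact T.asymm (v 0) (v (0 + 1)) h01 h12
    · have hn4 : 4 ≤ n := by omega
      have hne : ∀ i d, 0 < d → d < n → v i ≠ v (i + d) := by
        intro i d hd0 hdn heq
        have h1 : (⇑σ)^[d] (v i) = v i := by
          have e : v (i + d) = (⇑σ)^[d] (v i) := by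
            simp only [hv]
            rw [Nat.add_comm i d, Function.iterate_add_apply]
          rw [← e, ← heq]
        have hmp : Function.minimalPeriod ⇑σ (v i) = n := by
          simp only [hv, hn]
          exact Function.minimalPeriod_apply_iterate hzper i
        have hdvd : n ∣ d := by
          have h2 : Function.IsPeriodicPt ⇑σ d (v i) := h1
          have h3 := h2.minimalPeriod_dvd
          rwa [hmp] at h3
        have := Nat.le_of_dvd hd0 hdvd
        omega
      have hmod : ∀ i m, v (i + m) = v (i + m % n) := by
        intro i m
        have h1 : i + m = (i + m % n) + (m / n) * n := by
          conv_lhs => rw [← Nat.mod_add_div' m n]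
          ring
        rw [h1, hperMul]
      have hsymmv : ∀ i, σ.symm (v i) = v (i + (n - 1)) := by
        intro i
        have e1 : v i = v ((i + (n - 1)) + 1) := by
          rw [show (i + (n - 1)) + 1 = i + n by omega]
          exact (hper i).symm
        rw [e1, hsymm]
      have hG1 : ∀ i, T.Dom CTournament.green (v (i + 2)) (v i) := by
        intro i
        obtain ⟨c, hc⟩ := hdom (v (i + 2)) (v i)
          (hne i 2 (by omega) (by omega))
          (by
            rw [show σ.symm (v (i + 2)) = v (i + 1) from hsymm (i + 1)]
            exact hne i 1 (by omega) (by omega))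
        have hc1 : c ≠ altC i := by
          intro hcc
          refine hnopred (v (i + 2)) ⟨c, ?_⟩
          rw [show σ.symm (v (i + 2)) = v (i + 1) from hsymm (i + 1)]
          exact hc.tail ⟨hbeat i, by rw [hcolv i]; exact hcc.symm⟩
        have hc2 : c ≠ altC (i + 1) := by
          intro hcc
          refine hnopred (v (i + 1)) ⟨c, ?_⟩
          rw [show σ.symm (v (i + 1)) = v i from hsymm i]
          exact Relation.TransGen.head ⟨hbeat (i + 1), by rw [hcolv (i + 1)]; exact hcc.symm⟩ hc
        rcases altC_tri i c with hx | hx | hx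
        · exact absurd hx hc1
        · exact absurd hx hc2
        · exact hx ▸ hc
      have hchain : ∀ i k, T.Dom CTournament.green (v (i + (2 * k + 2))) (v i) := by
        intro i k
        induction k with
        | zero => exact hG1 i
        | succ k ih =>
          have h2 := hG1 (i + (2 * k + 2))
          have h3 := h2.trans ih
          have e : (i + (2 * k + 2)) + 2 = i + (2 * (k + 1) + 2) := by omega
          rwa [e] at h3
      have h2' : ∀ i t, Odd t → ¬ T.Dom CTournament.green (v i) (v (i + t)) := by
        intro i t hodt hdomg
        obtain ⟨a, ha⟩ := hodt
        have hB : T.Dom CTournament.green (v (i + t)) (v (i + (n - 1))) := by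
          have h1 := hchain (i + (n - 1)) (a + b)
          have e : (i + (n - 1)) + (2 * (a + b) + 2) = (i + t) + 2 * n := by omega
          rw [e] at h1
          rwa [show v ((i + t) + 2 * n) = v (i + t) from hperMul (i + t) 2] at h1
        refine hnopred (v i) ⟨CTournament.green, ?_⟩
        rw [hsymmv i]
        exact hdomg.trans hB
      have hvi : ∀ j, T.Dom (altC (j + 1)) (v (j + 3)) (v j) := by
        intro j
        obtain ⟨c, hc⟩ := hdom (v (j + 3)) (v j)
          (hne j 3 (by omega) (by omega))
          (by
            rw [show σ.symm (v (j + 3)) = v (j + 2) from hsymm (j + 2)]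
            exact hne j 2 (by omega) (by omega))
        have hcg : c ≠ CTournament.green := by
          intro hcc
          refine h2' (j + 3) (3 * (n - 1)) ⟨3 * b - 2, by omega⟩ ?_
          have e : v ((j + 3) + 3 * (n - 1)) = v j := by
            rw [show (j + 3) + 3 * (n - 1) = j + 3 * n by omega]
            exact hperMul j 3
          rw [e]
          exact hcc ▸ hc
        have hc1 : c ≠ altC j := by
          intro hcc
          refine hnopred (v (j + 2)) ⟨c, ?_⟩
          rw [show σ.symm (v (j + 2)) = v (j + 1) from hsymm (j + 1)]
          refine Relation.TransGen.tail (Relation.TransGen.head ⟨hbeat (j + 2), ?_⟩ hc) ⟨hbeat j, ?_⟩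
          · rw [hcolv (j + 2), altC_add_two]
            exact hcc.symm
          · rw [hcolv j]
            exact hcc.symm
        rcases altC_tri j c with hx | hx | hx
        · exact absurd hx hc1
        · exact hx ▸ hc
        · exact absurd hx hcg
      have hF2 : ∀ j, T.beats (v j) (v (j + 2)) := by
        intro j
        rcases T.total (v j) (v (j + 2)) (hne j 2 (by omega) (by omega)) with hgood | hbad
        · exact hgood
        · exfalso
          rcases altC_tri j (T.colour (v (j + 2)) (v j)) with hw | hw | hw
          · refine hnopred (v (j + 2)) ⟨altC j, ?_⟩
            rw [show σ.symm (v (j + 2)) = v (j + 1) from hsymm (j + 1)]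
            exact Relation.TransGen.tail (Relation.TransGen.single ⟨hbad, hw⟩) ⟨hbeat j, hcolv j⟩
          · refine hnopred (v (j + 1)) ⟨altC (j + 1), ?_⟩
            rw [show σ.symm (v (j + 1)) = v j from hsymm j]
            exact Relation.TransGen.head ⟨hbeat (j + 1), hcolv (j + 1)⟩ (Relation.TransGen.single ⟨hbad, hw⟩)
          · refine hT3 ⟨v j, v (j + 1), v (j + 2), hbeat j, hbeat (j + 1), hbad, ?_, ?_, ?_⟩
            · rw [hcolv j, hcolv (j + 1)]
              exact altC_succ_ne j
            · rw [hcolv (j + 1), hw]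
              exact altC_ne_green (j + 1)
            · rw [hcolv j, hw]
              exact altC_ne_green j
      have hX : ∀ j, T.colour (v j) (v (j + 2)) = CTournament.green := by
        intro j
        rcases altC_tri j (T.colour (v j) (v (j + 2))) with hx | hx | hx
        · exfalso
          have hv1 := hvi (j + (n - 1))
          have e1 : altC ((j + (n - 1)) + 1) = altC j := by
            rw [show (j + (n - 1)) + 1 = j + n by omega]
            exact altC_even_shift j n (by omega)
          have e2 : v ((j + (n - 1)) + 3) = v (j + 2) := by
            rw [show (j + (n - 1)) + 3 = (j + 2) + n by omega]
            exact hper (j + 2)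
          rw [e1, e2] at hv1
          refine hnopred (v j) ⟨altC j, ?_⟩
          rw [hsymmv j]
          exact Relation.TransGen.head ⟨hF2 j, hx⟩ hv1
        · exfalso
          refine hnopred (v (j + 3)) ⟨altC (j + 1), ?_⟩
          rw [show σ.symm (v (j + 3)) = v (j + 2) from hsymm (j + 2)]
          exact Relation.TransGen.tail (hvi j) ⟨hF2 j, hx⟩
        · exact hx
      have hP : ∀ k j, T.beats (v j) (v (j + (2 * k + 3))) := by
        intro k
        induction k with
        | zero =>
          intro j
          rcases T.total (v j) (v (j + 3)) (hne j 3 (by omega) (by omega)) with hgood | hbad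
          · exact hgood
          · exfalso
            rcases altC_tri j (T.colour (v (j + 3)) (v j)) with hw | hw | hw
            · refine hnopred (v (j + 2)) ⟨altC j, ?_⟩
              rw [show σ.symm (v (j + 2)) = v (j + 1) from hsymm (j + 1)]
              refine Relation.TransGen.tail
                (Relation.TransGen.head ⟨hbeat (j + 2), ?_⟩ (Relation.TransGen.single ⟨hbad, hw⟩))
                ⟨hbeat j, hcolv j⟩
              rw [hcolv (j + 2)]
              exact altC_add_two j
            · refine hT3 ⟨v j, v (j + 2), v (j + 3), hF2 j, hbeat (j + 2), hbad, ?_, ?_, ?_⟩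
              · rw [hX j, hcolv (j + 2), altC_add_two j]
                exact Ne.symm (altC_ne_green j)
              · rw [hcolv (j + 2), altC_add_two j, hw]
                exact altC_succ_ne j
              · rw [hX j, hw]
                exact Ne.symm (altC_ne_green (j + 1))
            · refine h2' (j + 3) (3 * (n - 1)) ⟨3 * b - 2, by omega⟩ ?_
              have e : v ((j + 3) + 3 * (n - 1)) = v j := by
                rw [show (j + 3) + 3 * (n - 1) = j + 3 * n by omega]
                exact hperMul j 3
              rw [e]
              exact Relation.TransGen.single ⟨hbad, hw⟩
        | succ k ih =>
          intro j
          have hneq : v j ≠ v (j + (2 * k + 5)) := by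
            have e1 : v (j + (2 * k + 5)) = v (j + (2 * k + 5) % n) := hmod j (2 * k + 5)
            have hne0 : (2 * k + 5) % n ≠ 0 := by
              intro h0
              obtain ⟨q, hq⟩ := Nat.dvd_of_mod_eq_zero h0
              have heven : ∃ r, n * q = r + r := ⟨b * q, by rw [hb]; ring⟩
              obtain ⟨r, hr⟩ := heven
              have h5 : 2 * k + 5 = r + r := by rw [hq, hr]
              omega
            rw [e1]
            exact hne j ((2 * k + 5) % n) (Nat.pos_of_ne_zero hne0) (Nat.mod_lt _ hnpos)
          rcases T.total (v j) (v (j + (2 * k + 5))) hneq with hgood | hbad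
          · exact hgood
          · exfalso
            have hIH : T.beats (v (j + 2)) (v (j + (2 * k + 5))) := by
              have h1 := ih (j + 2)
              have e : (j + 2) + (2 * k + 3) = j + (2 * k + 5) := by omega
              rwa [e] at h1
            by_cases hrg : T.colour (v (j + (2 * k + 5))) (v j) = CTournament.green
            · refine h2' (j + (2 * k + 5)) ((2 * k + 5) * (n - 1))
                (Odd.mul ⟨k + 2, by ring⟩ ⟨b - 1, by omega⟩) ?_
              have hident : (2 * k + 5) + (2 * k + 5) * (n - 1) = (2 * k + 5) * n := by
                have e3 : (n - 1) + 1 = n := by omega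
                calc (2 * k + 5) + (2 * k + 5) * (n - 1)
                    = (2 * k + 5) * ((n - 1) + 1) := by ring
                  _ = (2 * k + 5) * n := by rw [e3]
              have e : v ((j + (2 * k + 5)) + (2 * k + 5) * (n - 1)) = v j := by
                rw [Nat.add_assoc, hident]
                exact hperMul j (2 * k + 5)
              rw [e]
              exact Relation.TransGen.single ⟨hbad, hrg⟩
            · by_cases hbg : T.colour (v (j + 2)) (v (j + (2 * k + 5))) = CTournament.green
              · refine h2' (j + 2) (2 * k + 3) ⟨k + 1, by ring⟩ ?_
                have e : (j + 2) + (2 * k + 3) = j + (2 * k + 5) := by omega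
                rw [e]
                exact Relation.TransGen.single ⟨hIH, hbg⟩
              · by_cases hbr : T.colour (v (j + 2)) (v (j + (2 * k + 5))) = T.colour (v (j + (2 * k + 5))) (v j)
                · rcases altC_tri j (T.colour (v (j + 2)) (v (j + (2 * k + 5)))) with hβ | hβ | hβ
                  · refine hnopred (v (j + 2)) ⟨altC j, ?_⟩
                    rw [show σ.symm (v (j + 2)) = v (j + 1) from hsymm (j + 1)]
                    refine Relation.TransGen.tail (Relation.TransGen.tail
                      (Relation.TransGen.single ⟨hIH, hβ⟩) ⟨hbad, ?_⟩) ⟨hbeat j, hcolv j⟩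
                    rw [← hbr]
                    exact hβ
                  · refine hnopred (v (j + 1)) ⟨altC (j + 1), ?_⟩
                    rw [show σ.symm (v (j + 1)) = v j from hsymm j]
                    refine Relation.TransGen.head ⟨hbeat (j + 1), hcolv (j + 1)⟩
                      (Relation.TransGen.tail (Relation.TransGen.single ⟨hIH, hβ⟩) ⟨hbad, ?_⟩)
                    rw [← hbr]
                    exact hβ
                  · exact hbg hβ
                · refine hT3 ⟨v j, v (j + 2), v (j + (2 * k + 5)), hF2 j, hIH, hbad, ?_, hbr, ?_⟩
                  · rw [hX j]
                    exact fun hh => hbg hh.symm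
                  · rw [hX j]
                    exact fun hh => hrg hh.symm
      have hfin := hP (b - 2) 0
      have e1 : 0 + (2 * (b - 2) + 3) = n - 1 := by omega
      rw [e1] at hfin
      have hcyc := hbeat (n - 1)
      have e2 : v ((n - 1) + 1) = v 0 := by
        rw [show (n - 1) + 1 = 0 + n by omega]
        exact hper 0
      rw [e2] at hcyc
      exact T.asymm (v 0) (v (n - 1)) hfin hcyc
  · -- n odd
    obtain ⟨m, hm⟩ := hodd
    have h1 := (halt (m + 1)).1
    have h2 := (halt 0).2
    have e1 : (⇑σ)^[2 * (m + 1)] z = (⇑σ)^[1] z := by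
      have e := hper 1
      simp only [hv] at e
      rw [show 2 * (m + 1) = 1 + n by omega]
      exact e
    have e2 : (⇑σ)^[2 * (m + 1) + 1] z = (⇑σ)^[2] z := by
      have e := hper 2
      simp only [hv] at e
      rw [show 2 * (m + 1) + 1 = 2 + n by omega]
      exact e
    rw [e1, e2] at h1
    norm_num at h1 h2
    exact absurd (h1.symm.trans h2) (by decide)
end

section
/- Let D be a minimal counterexample, C its Hamilton cycle with the stated domination property, and x a vertex of D incident with no green edges such that the edge between x^- and x is red (directed from x^- to x). Then for every pair of vertices m ∈ B_b^+(x) and n ∈ R_r^-(x) with m ≠ n^+, the directed subpath mCn of C contains a vertex p ∈ R_r^+(x) such that the subpath mCp contains no vertex of B^-(x). -/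
/-! Walk along `C` from `m` towards `n`. As `x` has no green edges and no vertex dominates its
predecessor, `x` neither dominates another vertex in both red and blue nor is so dominated by one
(composing with the domination between `x` and a cycle-neighbour of that vertex, some vertex
would dominate its predecessor). Hence `x`
does not dominate `n` in blue, and there is a first vertex `v` of `mCn` that `x` does not
dominate in blue; every vertex of `mCv` after `m` follows a vertex blue-dominated by `x`, so none
of them is in `B⁻(x)`. If `x → v`, this edge is red and `v ∈ R_r⁺(x)`. Otherwise `v → x` is red,
and some vertex dominates everything in the proper subset `mCv ∪ {x}`: not a vertex of `mCv`
after `m`, as it would dominate its predecessor, and not `m`, which would then dominate `x` in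
red. So it is `x`, and the first edge of a red path inside the subset from `x` to `v` ends in
the required `p`. -/

theorem Equiv.Perm.exists_forall_iterate_ne {V : Type*} {σ : Equiv.Perm V} {m n : V}
    {K k : ℕ} (hK : ∀ j < K, (⇑σ)^[j] m ≠ n) (hmn : m ≠ σ n) (hkK : k ≤ K) :
    ∃ w, (w = n ∨ w = σ n) ∧ ∀ j ≤ k, (⇑σ)^[j] m ≠ w := by
  rcases hkK.lt_or_eq with hkK | rfl
  · exact ⟨n, .inl rfl, fun j hj => hK j (by omega)⟩
  · refine ⟨σ n, .inr rfl, ?_⟩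
    rintro (_ | j) hj e
    · exact hmn e
    · rw [Function.iterate_succ_apply'] at e
      exact hK j hj (σ.injective e)

namespace CTournament

variable {V : Type*}

def MDomAllIn (T : CTournament V) (S : Set V) (y : V) : Prop :=
  y ∈ S ∧ ∀ z ∈ S, z ≠ y → T.MDomIn S y z

variable {T : CTournament V} {S : Set V} {c : Fin 3} {a b m n v w x : V}

theorem eq_red_or_blue_of_ne_green : c ≠ green → c = red ∨ c = blue := by
  revert c; decide

theorem Dom.of_edge (h : T.beats a b) (hc : T.colour a b = c) : T.Dom c a b :=
  .single ⟨h, hc⟩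

theorem Dom.trans (h₁ : T.Dom c a b) (h₂ : T.Dom c b v) : T.Dom c a v :=
  Relation.TransGen.trans h₁ h₂

theorem Dom.exists_first_edge (h : T.Dom c a b) : ∃ w, T.beats a w ∧ T.colour a w = c :=
  let ⟨w, hw, _⟩ := Relation.TransGen.head'_iff.mp h
  ⟨w, hw⟩

theorem Dom.exists_last_edge (h : T.Dom c a b) : ∃ w, T.beats w b ∧ T.colour w b = c :=
  let ⟨w, _, hw⟩ := Relation.TransGen.tail'_iff.mp h
  ⟨w, hw⟩

theorem DomIn.dom (h : T.DomIn S c a b) : T.Dom c a b :=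
  Relation.TransGen.mono (fun _ _ hab => ⟨hab.2.2.1, hab.2.2.2⟩) _ _ h

theorem DomIn.exists_first_edge (h : T.DomIn S c a b) :
    ∃ w ∈ S, T.beats a w ∧ T.colour a w = c ∧ (b = w ∨ T.DomIn S c w b) := by
  obtain ⟨w, ⟨-, hwS, hw⟩, hwb⟩ := Relation.TransGen.head'_iff.mp h
  exact ⟨w, hwS, hw.1, hw.2, Relation.reflTransGen_iff_eq_or_transGen.mp hwb⟩

theorem DomIn.exists_last_edge (h : T.DomIn S c a b) :
    ∃ w ∈ S, T.beats w b ∧ T.colour w b = c :=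
  let ⟨w, _, hwS, _, hw⟩ := Relation.TransGen.tail'_iff.mp h
  ⟨w, hwS, hw⟩

theorem MinimalCex.exists_mDomAllIn (h : T.MinimalCex) (hne : S.Nonempty) (hS : S ≠ Set.univ) :
    ∃ y, T.MDomAllIn S y :=
  let ⟨y, hy, hall⟩ := h.2.2 S hne hS
  ⟨y, hy, hall⟩

theorem ne_of_mem_Bplus (h : m ∈ T.Bplus x) : m ≠ x :=
  fun e => T.irrefl x (e ▸ h.1)

theorem notMem_Bminus_of_mem_Bplus (h : m ∈ T.Bplus x) : m ∉ T.Bminus x :=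
  fun h' => T.asymm _ _ h.1 h'.1

theorem colour_out_eq_red_or_blue (hx : ¬ T.IncidentColour x green) (h : T.beats x w) :
    T.colour x w = red ∨ T.colour x w = blue :=
  eq_red_or_blue_of_ne_green fun hc => hx ⟨w, .inl ⟨h, hc⟩⟩

theorem colour_in_eq_red_or_blue (hx : ¬ T.IncidentColour x green) (h : T.beats w x) :
    T.colour w x = red ∨ T.colour w x = blue :=
  eq_red_or_blue_of_ne_green fun hc => hx ⟨w, .inr ⟨h, hc⟩⟩

theorem MDom.dom_red_or_blue_of_source (hx : ¬ T.IncidentColour x green) (h : T.MDom x v) :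
    T.Dom red x v ∨ T.Dom blue x v := by
  obtain ⟨c, hc⟩ := h
  obtain ⟨w, hw, rfl⟩ := hc.exists_first_edge
  rcases colour_out_eq_red_or_blue hx hw with hr | hb
  exacts [.inl (hr ▸ hc), .inr (hb ▸ hc)]

theorem MDom.dom_red_or_blue_of_target (hx : ¬ T.IncidentColour x green) (h : T.MDom v x) :
    T.Dom red v x ∨ T.Dom blue v x := by
  obtain ⟨c, hc⟩ := h
  obtain ⟨w, hw, rfl⟩ := hc.exists_last_edge
  rcases colour_in_eq_red_or_blue hx hw with hr | hb
  exacts [.inl (hr ▸ hc), .inr (hb ▸ hc)]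

theorem dom_red_of_mDomIn (hx : ¬ T.IncidentColour x green) (hS : ∀ w ∈ S, w ∉ T.Bminus x)
    (h : T.MDomIn S m x) : T.Dom red m x := by
  obtain ⟨c, hc⟩ := h
  obtain ⟨w, hwS, hwx, rfl⟩ := hc.exists_last_edge
  rcases colour_in_eq_red_or_blue hx hwx with hr | hb
  · exact hr ▸ hc.dom
  · exact absurd ⟨hwx, hb⟩ (hS w hwS)

theorem exists_mem_Rrplus_of_mDomAllIn (hx : ¬ T.IncidentColour x green)
    (hxS : T.MDomAllIn S x) (hvS : v ∈ S) (hvx : T.beats v x) (hvred : T.colour v x = red)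
    (hv : ¬ T.Dom blue x v) : ∃ w ∈ S, w ∈ T.Rrplus x := by
  obtain ⟨c, hc⟩ := hxS.2 v hvS fun e => T.irrefl x (e ▸ hvx)
  obtain ⟨w, hwS, hxw, rfl, hwv⟩ := hc.exists_first_edge
  have hred : T.colour x w = red :=
    (colour_out_eq_red_or_blue hx hxw).resolve_right fun hb => hv (hb ▸ hc.dom)
  rcases hwv with rfl | hwv
  · exact absurd hxw (T.asymm _ _ hvx)
  · exact ⟨w, hwS, ⟨hxw, hred⟩, (hred ▸ hwv.dom).trans (.of_edge hvx hvred)⟩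

theorem exists_le_of_mem_pathSet_iterate {σ : Equiv.Perm V} {z : V} {i : ℕ}
    (hz : z ∈ PathSet σ m ((⇑σ)^[i] m)) : ∃ l ≤ i, (⇑σ)^[l] m = z := by
  obtain ⟨l, rfl, hl⟩ := hz
  exact ⟨l, not_lt.mp fun hil => hl i hil rfl, rfl⟩

namespace HamDomProp

variable {σ : Equiv.Perm V} {k : ℕ} {y : V} (hprop : T.HamDomProp σ)
include hprop

theorem not_dom_pred (c : Fin 3) (y : V) : ¬ T.Dom c y (σ.symm y) :=
  fun h => hprop.2 y ⟨c, h⟩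

theorem succ_ne_of_dom (h : T.Dom c x v) : σ v ≠ x := by
  rintro rfl
  exact hprop.not_dom_pred c _ (by rwa [Equiv.symm_apply_apply])

theorem succ_notMem_Bminus (h : T.Dom blue x v) : σ v ∉ T.Bminus x := by
  rintro ⟨hb, hc⟩
  exact hprop.not_dom_pred blue (σ v)
    (by rw [Equiv.symm_apply_apply]; exact (Dom.of_edge hb hc).trans h)

theorem not_dom_red_and_blue_to (hx : ¬ T.IncidentColour x green) (hmx : m ≠ x) :
    ¬ (T.Dom red m x ∧ T.Dom blue m x) := by
  rintro ⟨hr, hb⟩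
  have hpx : σ.symm m ≠ x := fun e => hprop.not_dom_pred blue m (e ▸ hb)
  have hxp := hprop.1 x (σ.symm m) hpx fun e => hmx (σ.symm.injective e)
  rcases hxp.dom_red_or_blue_of_source hx with h | h
  exacts [hprop.not_dom_pred red m (hr.trans h), hprop.not_dom_pred blue m (hb.trans h)]

theorem not_dom_red_and_blue_from (hx : ¬ T.IncidentColour x green) (hnx : n ≠ x) :
    ¬ (T.Dom red x n ∧ T.Dom blue x n) := by
  rintro ⟨hr, hb⟩
  have hsx := hprop.1 (σ n) x (hprop.succ_ne_of_dom hr).symm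
    (by rw [Equiv.symm_apply_apply]; exact hnx.symm)
  rcases hsx.dom_red_or_blue_of_target hx with h | h
  · exact hprop.not_dom_pred red (σ n) (by rw [Equiv.symm_apply_apply]; exact h.trans hr)
  · exact hprop.not_dom_pred blue (σ n) (by rw [Equiv.symm_apply_apply]; exact h.trans hb)

theorem iterate_ne_of_blue_run (hmx : m ≠ x) (hrun : ∀ j < k, T.Dom blue x ((⇑σ)^[j] m)) :
    ∀ j ≤ k, (⇑σ)^[j] m ≠ x
  | 0, _ => hmx
  | j + 1, hj => by
    rw [Function.iterate_succ_apply']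
    exact hprop.succ_ne_of_dom (hrun j hj)

theorem iterate_notMem_Bminus_of_blue_run (hm : m ∉ T.Bminus x)
    (hrun : ∀ j < k, T.Dom blue x ((⇑σ)^[j] m)) : ∀ j ≤ k, (⇑σ)^[j] m ∉ T.Bminus x
  | 0, _ => hm
  | j + 1, hj => by
    rw [Function.iterate_succ_apply']
    exact hprop.succ_notMem_Bminus (hrun j hj)

theorem not_mDomAllIn_of_pred_mem (hbeats : ∀ v, T.beats v (σ v)) (hy : σ.symm y ∈ S) :
    ¬ T.MDomAllIn S y := by
  rintro ⟨-, hall⟩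
  have hne : σ.symm y ≠ y := by
    intro e
    have hyy := hbeats y
    rw [← σ.symm_apply_eq.mp e] at hyy
    exact T.irrefl y hyy
  obtain ⟨c, hc⟩ := hall _ hy hne
  exact hprop.not_dom_pred c y hc.dom

theorem mem_Rrplus_of_out_edge (hx : ¬ T.IncidentColour x green) (hxv : T.beats x v)
    (hv : ¬ T.Dom blue x v) (hpv : T.Dom blue x (σ.symm v)) (hpx : σ.symm v ≠ x) :
    v ∈ T.Rrplus x := by
  have hvx : v ≠ x := fun e => T.irrefl x (e ▸ hxv)
  refine ⟨⟨hxv, (colour_out_eq_red_or_blue hx hxv).resolve_right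
    fun hb => hv (.of_edge hxv hb)⟩, ?_⟩
  refine ((hprop.1 v x hvx.symm hpx.symm).dom_red_or_blue_of_target hx).resolve_right
    fun hb => ?_
  exact hprop.not_dom_pred blue v (hb.trans hpv)

theorem exists_mem_Rrplus_of_in_edge (h : T.MinimalCex) (hbeats : ∀ v, T.beats v (σ v))
    (hx : ¬ T.IncidentColour x green) (hm : m ∈ T.Bbplus x)
    (hne : ∀ j ≤ k, (⇑σ)^[j] m ≠ x) (hnoB : ∀ j ≤ k, (⇑σ)^[j] m ∉ T.Bminus x)
    (hk : ¬ T.Dom blue x ((⇑σ)^[k] m)) (hvx : T.beats ((⇑σ)^[k] m) x)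
    (hout : ∃ w, w ≠ x ∧ ∀ j ≤ k, (⇑σ)^[j] m ≠ w) :
    ∃ i < k, (⇑σ)^[i] m ∈ T.Rrplus x := by
  set S : Set V := insert x {z | ∃ j ≤ k, (⇑σ)^[j] m = z}
  have hSB : ∀ w ∈ S, w ∉ T.Bminus x := by
    rintro w (rfl | ⟨j, hj, rfl⟩)
    · exact fun hw => T.irrefl _ hw.1
    · exact hnoB j hj
  have hSu : S ≠ Set.univ := by
    obtain ⟨w, hwx, hw⟩ := hout
    intro hS
    have hwS : w ∈ S := hS ▸ Set.mem_univ w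
    rcases hwS with rfl | ⟨j, hj, rfl⟩
    exacts [hwx rfl, hw j hj rfl]
  obtain ⟨y, hy⟩ := h.exists_mDomAllIn ⟨x, .inl rfl⟩ hSu
  rcases hy.1 with hyx | ⟨_ | j, hj, rfl⟩
  · rw [hyx] at hy
    have hvred : T.colour ((⇑σ)^[k] m) x = red :=
      (colour_in_eq_red_or_blue hx hvx).resolve_right fun hb => hnoB k le_rfl ⟨hvx, hb⟩
    obtain ⟨w, hwS, hw⟩ :=
      exists_mem_Rrplus_of_mDomAllIn hx hy (.inr ⟨k, le_rfl, rfl⟩) hvx hvred hk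
    rcases hwS with rfl | ⟨i, hi, rfl⟩
    · exact absurd hw.1.1 (T.irrefl _)
    · refine ⟨i, lt_of_le_of_ne hi ?_, hw⟩
      rintro rfl
      exact T.asymm _ _ hvx hw.1.1
  · have hmx := hne 0 k.zero_le
    exact absurd ⟨dom_red_of_mDomIn hx hSB (hy.2 x (.inl rfl) hmx.symm), hm.2⟩
      (hprop.not_dom_red_and_blue_to hx hmx)
  · refine absurd hy <| hprop.not_mDomAllIn_of_pred_mem hbeats <|
      .inr ⟨j, j.le_succ.trans hj, ?_⟩
    rw [Function.iterate_succ_apply', Equiv.symm_apply_apply]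

theorem exists_mem_Rrplus_of_blue_run (h : T.MinimalCex) (hbeats : ∀ v, T.beats v (σ v))
    (hx : ¬ T.IncidentColour x green) (hm : m ∈ T.Bbplus x)
    (hrun : ∀ j < k, T.Dom blue x ((⇑σ)^[j] m)) (hk : ¬ T.Dom blue x ((⇑σ)^[k] m))
    (hout : ∃ w, w ≠ x ∧ ∀ j ≤ k, (⇑σ)^[j] m ≠ w) :
    ∃ i ≤ k, (⇑σ)^[i] m ∈ T.Rrplus x := by
  have hne := hprop.iterate_ne_of_blue_run (ne_of_mem_Bplus hm.1) hrun
  rcases T.total x _ (hne k le_rfl).symm with hxv | hvx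
  · obtain ⟨j, rfl⟩ : ∃ j, k = j + 1 :=
      Nat.exists_eq_succ_of_ne_zero (by rintro rfl; exact hk (.of_edge hm.1.1 hm.1.2))
    refine ⟨j + 1, le_rfl, hprop.mem_Rrplus_of_out_edge hx hxv hk ?_ ?_⟩ <;>
      rw [Function.iterate_succ_apply', Equiv.symm_apply_apply]
    exacts [hrun j j.lt_succ_self, hne j j.le_succ]
  · have hnoB := hprop.iterate_notMem_Bminus_of_blue_run (notMem_Bminus_of_mem_Bplus hm.1) hrun
    obtain ⟨i, hi, hp⟩ :=
      hprop.exists_mem_Rrplus_of_in_edge h hbeats hx hm hne hnoB hk hvx hout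
    exact ⟨i, hi.le, hp⟩

end HamDomProp

end CTournament

open CTournament

theorem subpath_contains_Rrplus_vertex_general {V : Type*} (T : CTournament V)
    (h : T.MinimalCex) (σ : Equiv.Perm V)
    (hσ : T.IsHamCycle σ) (hprop : T.HamDomProp σ)
    (x : V) (hx : ¬ T.IncidentColour x CTournament.green) :
    ∀ m ∈ T.Bbplus x, ∀ n ∈ T.Rrminus x, m ≠ σ n →
      ∃ p ∈ T.Rrplus x, p ∈ CTournament.PathSet σ m n ∧
        ∀ z ∈ CTournament.PathSet σ m p, z ∉ T.Bminus x := by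
  classical
  intro m hm n hn hmn
  have hnx : n ≠ x := fun e => T.irrefl x (e ▸ hn.1.1)
  obtain ⟨K, hKn, hK⟩ : ∃ K, (⇑σ)^[K] m = n ∧ ∀ j < K, (⇑σ)^[j] m ≠ n :=
    ⟨Nat.find (hσ.2 m n), Nat.find_spec (hσ.2 m n), fun _ => Nat.find_min (hσ.2 m n)⟩
  have hKblue : ¬ T.Dom blue x ((⇑σ)^[K] m) :=
    hKn ▸ fun hb => hprop.not_dom_red_and_blue_from hx hnx ⟨hn.2, hb⟩
  obtain ⟨k, hkK, hk, hrun⟩ : ∃ k ≤ K, ¬ T.Dom blue x ((⇑σ)^[k] m) ∧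
      ∀ j < k, T.Dom blue x ((⇑σ)^[j] m) :=
    have hex : ∃ k, ¬ T.Dom blue x ((⇑σ)^[k] m) := ⟨K, hKblue⟩
    ⟨Nat.find hex, Nat.find_min' hex hKblue, Nat.find_spec hex,
      fun _ hj => not_not.mp (Nat.find_min hex hj)⟩
  obtain ⟨w, hw, hwk⟩ := σ.exists_forall_iterate_ne hK hmn hkK
  have hwx : w ≠ x := by
    rcases hw with rfl | rfl
    exacts [hnx, hprop.succ_ne_of_dom hn.2]
  obtain ⟨i, hik, hp⟩ :=
    hprop.exists_mem_Rrplus_of_blue_run h hσ.1 hx hm hrun hk ⟨w, hwx, hwk⟩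
  refine ⟨(⇑σ)^[i] m, hp, ⟨i, rfl, fun j hj => hK j (by omega)⟩, fun z hz => ?_⟩
  obtain ⟨l, hli, rfl⟩ := exists_le_of_mem_pathSet_iterate hz
  exact hprop.iterate_notMem_Bminus_of_blue_run (notMem_Bminus_of_mem_Bplus hm.1) hrun l
    (hli.trans hik)

/-- In a minimal counterexample with Hamilton cycle `σ`, if `x`
is incident with no green edge and the edge from `x⁻` to `x` is red, then for all
`m ∈ B_b⁺(x)` and `n ∈ R_r⁻(x)` with `m ≠ n⁺`, the subpath `mCn` contains a vertex
`p ∈ R_r⁺(x)` such that `mCp` contains no vertex of `B⁻(x)`. -/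
theorem subpath_contains_Rrplus_vertex {V : Type*} [Fintype V] (T : CTournament V)
    (h : T.MinimalCex) (σ : Equiv.Perm V)
    (hσ : T.IsHamCycle σ) (hprop : T.HamDomProp σ)
    (x : V) (hx : ¬ T.IncidentColour x CTournament.green)
    (hpred : T.beats (σ.symm x) x)
    (hpredred : T.colour (σ.symm x) x = CTournament.red) :
    ∀ m ∈ T.Bbplus x, ∀ n ∈ T.Rrminus x, m ≠ σ n →
      ∃ p ∈ T.Rrplus x, p ∈ CTournament.PathSet σ m n ∧
        ∀ z ∈ CTournament.PathSet σ m p, z ∉ T.Bminus x :=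
  subpath_contains_Rrplus_vertex_general T h σ hσ hprop x hx
end

section
/- Let T be a finite 3-coloured tournament in which no vertex monochromatically dominates every other vertex. Then T contains a directed cycle (of length at least 3) such that no vertex on the cycle monochromatically dominates its predecessor on the cycle. -/
/-- In a finite 3-coloured tournament in which no vertex
monochromatically dominates every other vertex, there is a directed cycle (of
length at least 3) such that no vertex on the cycle monochromatically dominates
its predecessor on the cycle. -/
theorem exists_cycle_no_pred_domination {V : Type*} [Fintype V] [Nonempty V]
    (T : CTournament V)
    (h : ¬ ∃ x : V, ∀ y, y ≠ x → T.MDom x y) :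
    ∃ (n : ℕ) (f : ℕ → V), 3 ≤ n ∧
      (∀ i < n, ∀ j < n, f i = f j → i = j) ∧
      (∀ i < n, T.beats (f i) (f ((i+1) % n))) ∧
      (∀ i < n, ¬ T.MDom (f ((i+1) % n)) (f i)) := by
  classical
  have hgE : ∀ x : V, ∃ y, y ≠ x ∧ ¬ T.MDom x y := by
    intro x
    by_contra hc
    push_neg at hc
    exact h ⟨x, hc⟩
  choose g hne hnd using hgE
  have hgb : ∀ x, T.beats (g x) x := by
    intro x
    rcases T.total (g x) x (hne x) with h1 | h1
    · exact h1
    · exact absurd ⟨T.colour x (g x), Relation.TransGen.single ⟨h1, rfl⟩⟩ (hnd x)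
  set x0 : V := Classical.arbitrary V with hx0
  set s : ℕ → V := fun k => g^[k] x0 with hsdef
  have hstep : ∀ k, s (k + 1) = g (s k) := fun k => Function.iterate_succ_apply' g k x0
  have hrep : ∃ j, ∃ i, i < j ∧ s i = s j := by
    obtain ⟨a, b, hab, he⟩ := Finite.exists_ne_map_eq_of_infinite s
    rcases hab.lt_or_gt with hl | hl
    · exact ⟨b, a, hl, he⟩
    · exact ⟨a, b, hl, he.symm⟩
  set j := Nat.find hrep with hjdef
  obtain ⟨i, hij, hsij⟩ := Nat.find_spec hrep
  rw [← hjdef] at hij hsij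
  have hmin : ∀ k, k < j → ¬ ∃ i, i < k ∧ s i = s k := fun k hk => Nat.find_min hrep hk
  have hinj : ∀ a b, i < a → a ≤ j → i < b → b ≤ j → s a = s b → a = b := by
    have key : ∀ a b, i < a → a < b → b ≤ j → s a = s b → False := by
      intro a b ha1 hab hb2 he
      rcases lt_or_eq_of_le hb2 with hb | hb
      · exact hmin b hb ⟨a, hab, he⟩
      · subst hb
        exact hmin a (lt_of_lt_of_le hab le_rfl) ⟨i, ha1, by rw [hsij, ← he]⟩
    intro a b ha1 ha2 hb1 hb2 he
    rcases lt_trichotomy a b with hl | hl | hl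
    · exact absurd (key a b ha1 hl hb2 he) (by simp)
    · exact hl
    · exact absurd (key b a hb1 hl ha2 he.symm) (by simp)
  set n := j - i with hndef
  have hnj : n ≤ j := Nat.sub_le _ _
  have hn1 : 1 ≤ n := by omega
  have hge3 : 3 ≤ n := by
    by_contra hlt
    interval_cases n
    · -- n = 1 : s i = s (i+1) = g (s i)
      have h1 : j = i + 1 := by omega
      have : s i = g (s i) := by rw [← hstep, ← h1, hsij]
      exact hne (s i) this.symm
    · -- n = 2
      have h2 : j = i + 2 := by omega
      have ha : s (i+1) = g (s i) := hstep i
      have hb2 : s i = g (s (i+1)) := by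
        rw [← hstep, ← h2, hsij]
      have hxy : s (i+1) ≠ s i := ha ▸ hne (s i)
      rcases T.total (s i) (s (i+1)) (Ne.symm hxy) with hbt | hbt
      · exact (ha ▸ hnd (s i)) ⟨T.colour (s i) (s (i+1)), Relation.TransGen.single ⟨hbt, rfl⟩⟩
      · exact (hb2 ▸ hnd (s (i+1))) ⟨T.colour (s (i+1)) (s i), Relation.TransGen.single ⟨hbt, rfl⟩⟩
  set f : ℕ → V := fun m => s (j - m % n) with hfdef
  have hkey : ∀ m, m < n → f m = g (f ((m + 1) % n)) := by
    intro m hm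
    by_cases hc : m + 1 = n
    · have h0 : (m + 1) % n = 0 := by rw [hc, Nat.mod_self]
      have hm' : m % n = m := Nat.mod_eq_of_lt hm
      simp only [hfdef, h0, hm', Nat.zero_mod, Nat.sub_zero]
      have h1 : j - m = i + 1 := by omega
      rw [h1, ← hsij]
      exact hstep i
    · have h1 : (m + 1) % n = m + 1 := Nat.mod_eq_of_lt (by omega)
      have hm' : m % n = m := Nat.mod_eq_of_lt hm
      simp only [hfdef, h1, hm']
      have h2 : j - m = (j - (m + 1)) + 1 := by omega
      rw [h2, hstep]
  refine ⟨n, f, hge3, ?_, ?_, ?_⟩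
  · intro a ha b hb he
    have hma : a % n = a := Nat.mod_eq_of_lt ha
    have hmb : b % n = b := Nat.mod_eq_of_lt hb
    simp only [hfdef, hma, hmb] at he
    have := hinj (j - a) (j - b) (by omega) (by omega) (by omega) (by omega) he
    omega
  · intro m hm
    rw [hkey m hm]
    exact hgb _
  · intro m hm
    rw [hkey m hm]
    exact hnd _
end
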